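/- arXiv:1501.00095 — 2 statements merged into one kernel-verified Lean document; each statement's English description precedes it below -/
import Mathlib

section
/- Let B and D be two indecomposable sub-bimodules of the A-A-bimodule A such that the product ideal BD is nonzero. Then supp(BD) = supp(B) ∩ supp(D). -/
/-!
An ideal of `kQ` is spanned by the paths it contains, so it is encoded by its set of paths
`(s, t)`, which is closed under extending paths at both ends; for an indecomposable ideal this
set is connected under nesting, and the paths of `BD` are the composites of a path of `D` with
a path of `B`. Suppose a vertex or an arrow lies on paths of both `B` and `D` but on no path of
`BD`. Admissibility makes the successors (predecessors) of a vertex with an incoming (outgoing)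
arrow a chain, which locates an arrow `β → μ` such that no source of a path of `B` lies beyond
`μ` and no target of a path of `D` lies before `β`. By connectedness, the sources of `B` then all
lie on the tail side of the bridge `β → μ` and the targets of `D` on its head side. But
`BD ≠ 0` provides a vertex that is both.
-/

set_option maxHeartbeats 1000000
set_option synthInstance.maxHeartbeats 400000

namespace DPF

open Matrix

/-- A finite quiver on `Fin n` (given by an arrow relation, no loops, no two-cycles)
whose underlying (undirected simple) graph is a tree. -/
structure TreeQuiver (n : ℕ) : Type where
  arr : Fin n → Fin n → Prop
  loopless : ∀ i, ¬ arr i i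
  oneway : ∀ i j, arr i j → ¬ arr j i
  isTree : (SimpleGraph.fromRel arr).IsTree

namespace TreeQuiver

variable {n : ℕ}

/-- The underlying simple graph of the quiver. -/
def G (Q : TreeQuiver n) : SimpleGraph (Fin n) := SimpleGraph.fromRel Q.arr

/-- `Q.Reach i j` : `j` is a successor of `i`, i.e. there is an oriented
(possibly trivial) path from `i` to `j`. -/
def Reach (Q : TreeQuiver n) (i j : Fin n) : Prop := Relation.ReflTransGen Q.arr i j

/-- `i` is a sink (no outgoing arrows). -/
def IsSink (Q : TreeQuiver n) (i : Fin n) : Prop := ∀ j, ¬ Q.arr i j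

/-- `i` is a source (no incoming arrows). -/
def IsSource (Q : TreeQuiver n) (i : Fin n) : Prop := ∀ j, ¬ Q.arr j i

/-- The degree of a vertex in the underlying graph. -/
noncomputable def deg (Q : TreeQuiver n) (i : Fin n) : ℕ := {j | Q.G.Adj i j}.ncard

/-- `i ∈ K(Q)`: `i` is a sink or a source. -/
def inK (Q : TreeQuiver n) (i : Fin n) : Prop := Q.IsSink i ∨ Q.IsSource i

/-- `i ∈ K'(Q)`: a sink or a source of degree at least 2. -/
def inK' (Q : TreeQuiver n) (i : Fin n) : Prop := Q.inK i ∧ 2 ≤ Q.deg i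

/-- `Q` is admissible: all vertices of degree at least 3 are sinks or sources. -/
def Admissible (Q : TreeQuiver n) : Prop := ∀ i, 3 ≤ Q.deg i → Q.inK i

/-- A maximal chain of `Q` is (the oriented path between) a pair `(s, t)` where `s` is a
source, `t` is a sink, and `t` is reachable from `s`. -/
def IsMaxChain (Q : TreeQuiver n) (s t : Fin n) : Prop :=
  Q.IsSource s ∧ Q.IsSink t ∧ Q.Reach s t

/-- The vertex set of a chain from `s` to `t`. -/
def chainSet (Q : TreeQuiver n) (s t : Fin n) : Set (Fin n) := {v | Q.Reach s v ∧ Q.Reach v t}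

/-- The vertex set of the union of a collection `S` of (maximal) chains, i.e. of the
corresponding "support" subgraph. -/
def suppVerts (Q : TreeQuiver n) (S : Set (Fin n × Fin n)) : Set (Fin n) :=
  {v | ∃ c ∈ S, v ∈ Q.chainSet c.1 c.2}

/-- The adjacency relation of the subgraph given by the union of the chains in `S`. -/
def suppAdj (Q : TreeQuiver n) (S : Set (Fin n × Fin n)) (i j : Fin n) : Prop :=
  Q.G.Adj i j ∧ ∃ c ∈ S, i ∈ Q.chainSet c.1 c.2 ∧ j ∈ Q.chainSet c.1 c.2

/-- The degree of a vertex in the subgraph given by the union of the chains in `S`. -/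
noncomputable def suppDeg (Q : TreeQuiver n) (S : Set (Fin n × Fin n)) (i : Fin n) : ℕ :=
  {j | Q.suppAdj S i j}.ncard

/-- The subgraph given by the union of the chains in `S` is connected. -/
def SuppConnected (Q : TreeQuiver n) (S : Set (Fin n × Fin n)) : Prop :=
  ∀ u ∈ Q.suppVerts S, ∀ v ∈ Q.suppVerts S, Relation.ReflTransGen (Q.suppAdj S) u v

/-- The two unions of (maximal) chains `S`, `T` are equal as subgraphs of `Q`. -/
def SuppEq (Q : TreeQuiver n) (S T : Set (Fin n × Fin n)) : Prop :=
  Q.suppVerts S = Q.suppVerts T ∧ ∀ i j, Q.suppAdj S i j ↔ Q.suppAdj T i j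

/-- A path function: `α i` is a successor of `i` or `0` (here: `none`). -/
def IsPathFun (Q : TreeQuiver n) (α : Fin n → Option (Fin n)) : Prop :=
  ∀ i j, α i = some j → Q.Reach i j

/-- Monotonicity of a path function. -/
def MonotoneFun (Q : TreeQuiver n) (α : Fin n → Option (Fin n)) : Prop :=
  ∀ i j x, Q.Reach j i → α i = some x → ∃ y, α j = some y ∧ Q.Reach y x

/-- The support of a function `α : Q₀ → Q₀ ∪ {0}`: the set of maximal chains containing
some value of `α`. -/
def suppF (Q : TreeQuiver n) (α : Fin n → Option (Fin n)) : Set (Fin n × Fin n) :=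
  {c | Q.IsMaxChain c.1 c.2 ∧ ∃ i x, α i = some x ∧ x ∈ Q.chainSet c.1 c.2}

/-- A special function: a monotone path function with connected support such that any
sink-or-source vertex of the support sent to `0` has degree `1` in the support. -/
def SpecialFun (Q : TreeQuiver n) (α : Fin n → Option (Fin n)) : Prop :=
  Q.IsPathFun α ∧ Q.MonotoneFun α ∧ Q.SuppConnected (Q.suppF α) ∧
    ∀ i, Q.inK i → i ∈ Q.suppVerts (Q.suppF α) → α i = none → Q.suppDeg (Q.suppF α) i = 1

/-- `Q.Gamma s t`: the vertex set of the connected component of `t` in the graph obtained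
from `Q` by deleting the vertex `s`. -/
def Gamma (Q : TreeQuiver n) (s t : Fin n) : Set (Fin n) :=
  {v | Relation.ReflTransGen (fun a b => Q.G.Adj a b ∧ a ≠ s ∧ b ≠ s) t v}

end TreeQuiver

open TreeQuiver

section Algebra

variable {n : ℕ} (Q : TreeQuiver n) (k : Type) [Field k]

/-- The path algebra of the tree quiver `Q` over `k`, realized concretely as the
subalgebra of `Matrix (Fin n) (Fin n) k` of matrices supported on the reachability
relation; the matrix unit in position `(j, i)` corresponds to the unique path
`a_{ji}` from `i` to `j`. -/
def pathAlg : Subalgebra k (Matrix (Fin n) (Fin n) k) where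
  carrier := {x | ∀ i j, ¬ Q.Reach j i → x i j = 0}
  mul_mem' := by
    intro x y hx hy i j hij
    rw [Matrix.mul_apply]
    refine Finset.sum_eq_zero fun m _ => ?_
    by_cases h1 : Q.Reach m i
    · have h2 : ¬ Q.Reach j m := fun h2 => hij (Relation.ReflTransGen.trans h2 h1)
      rw [hy m j h2, mul_zero]
    · rw [hx i m h1, zero_mul]
  one_mem' := by
    intro i j hij
    have hne : i ≠ j := by rintro rfl; exact hij Relation.ReflTransGen.refl
    exact Matrix.one_apply_ne hne
  add_mem' := by
    intro x y hx hy i j hij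
    simp only [Matrix.add_apply, hx i j hij, hy i j hij, add_zero]
  zero_mem' := by intro i j hij; rfl
  algebraMap_mem' := by
    intro r i j hij
    have hne : i ≠ j := by rintro rfl; exact hij Relation.ReflTransGen.refl
    simp [Matrix.algebraMap_matrix_apply, hne]

theorem std_mem (t s : Fin n) (h : Q.Reach s t) :
    Matrix.single t s (1 : k) ∈ pathAlg Q k := by
  intro i j hij
  by_cases h1 : t = i ∧ s = j
  · obtain ⟨rfl, rfl⟩ := h1
    exact absurd h hij
  · simp only [Matrix.single, Matrix.of_apply, if_neg h1]

/-- The path `a_{ts}` from `s` to `t`, as an element of the path algebra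
(by convention `0` if `t` is not a successor of `s`). -/
noncomputable def aEl (t s : Fin n) : pathAlg Q k :=
  haveI := Classical.dec (Q.Reach s t)
  if h : Q.Reach s t then ⟨Matrix.single t s 1, std_mem Q k t s h⟩ else 0

/-- The trivial path `e_i` at the vertex `i`. -/
noncomputable def e (i : Fin n) : pathAlg Q k :=
  ⟨Matrix.single i i 1, std_mem Q k i i Relation.ReflTransGen.refl⟩

/-- `B` is a two-sided ideal of the path algebra, i.e. a sub-bimodule of the regular
`A`-`A`-bimodule `A`. -/
def IsIdeal (B : Submodule k ↥(pathAlg Q k)) : Prop :=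
  (∀ a : ↥(pathAlg Q k), ∀ x ∈ B, a * x ∈ B) ∧ (∀ a : ↥(pathAlg Q k), ∀ x ∈ B, x * a ∈ B)

/-- `B` is an indecomposable sub-bimodule of `A`: a nonzero two-sided ideal which does not
decompose as an (internal) direct sum of two nonzero sub-bimodules. -/
def Indec (B : Submodule k ↥(pathAlg Q k)) : Prop :=
  IsIdeal Q k B ∧ B ≠ ⊥ ∧
    ∀ B1 B2 : Submodule k ↥(pathAlg Q k), IsIdeal Q k B1 → IsIdeal Q k B2 →
      B1 ⊔ B2 = B → B1 ⊓ B2 = ⊥ → B1 = ⊥ ∨ B2 = ⊥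

/-- The support of a two-sided ideal `B`: the set of maximal chains `(s, t)` of `Q`
such that `a_{ts} ∈ B`. -/
def suppB (B : Submodule k ↥(pathAlg Q k)) : Set (Fin n × Fin n) :=
  {c | Q.IsMaxChain c.1 c.2 ∧ aEl Q k c.2 c.1 ∈ B}

/-- The indecomposable projective left module `P_j = A e_j`, as a left ideal of `A`. -/
def Pmod (j : Fin n) : Submodule ↥(pathAlg Q k) ↥(pathAlg Q k) where
  carrier := {x | x * e Q k j = x}
  add_mem' := by
    intro a b ha hb
    show (a + b) * e Q k j = a + b
    rw [add_mul]
    rw [show a * e Q k j = a from ha, show b * e Q k j = b from hb]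
  zero_mem' := by
    show (0 : ↥(pathAlg Q k)) * e Q k j = 0
    rw [zero_mul]
  smul_mem' := by
    intro c x hx
    show (c • x) * e Q k j = c • x
    rw [smul_eq_mul, mul_assoc, show x * e Q k j = x from hx]

/-- `B e_i`, as a left ideal (left `A`-submodule) of `A`; here `B` is a two-sided ideal. -/
def BeiL (B : Submodule k ↥(pathAlg Q k)) (hB : IsIdeal Q k B) (i : Fin n) :
    Submodule ↥(pathAlg Q k) ↥(pathAlg Q k) where
  carrier := {x | x ∈ B ∧ x * e Q k i = x}
  add_mem' := by
    intro a b ha hb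
    exact ⟨B.add_mem ha.1 hb.1, by rw [add_mul, ha.2, hb.2]⟩
  zero_mem' := ⟨B.zero_mem, by rw [zero_mul]⟩
  smul_mem' := by
    intro c x hx
    refine ⟨?_, ?_⟩
    · show c * x ∈ B
      exact hB.1 c x hx.1
    · show (c • x) * e Q k i = c • x
      rw [smul_eq_mul, mul_assoc, hx.2]

/-- A left `A`-submodule `N` of `A` is (zero or) indecomposable. -/
def IndecL (N : Submodule ↥(pathAlg Q k) ↥(pathAlg Q k)) : Prop :=
  N ≠ ⊥ ∧ ∀ N1 N2 : Submodule ↥(pathAlg Q k) ↥(pathAlg Q k),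
    N1 ⊔ N2 = N → N1 ⊓ N2 = ⊥ → N1 = ⊥ ∨ N2 = ⊥

/-- `x` is "the" function `x_B` associated to the indecomposable sub-bimodule `B`:
`x i = none` iff `B e_i = 0`, and `x i = some j` implies `B e_i ≅ P_j` as left `A`-modules. -/
def IsXB (B : Submodule k ↥(pathAlg Q k)) (hB : IsIdeal Q k B) (x : Fin n → Option (Fin n)) :
    Prop :=
  ∀ i, (x i = none ↔ BeiL Q k B hB i = ⊥) ∧
    ∀ j, x i = some j →
      Nonempty (↥(BeiL Q k B hB i) ≃ₗ[↥(pathAlg Q k)] ↥(Pmod Q k j))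

/-- The subspace `B_x` of `A` associated to a (special) function `x` : the `k`-linear span
of all paths `a_{ts}` with `x s ≠ 0` and `t` a successor of `x s`. -/
def Bspan (x : Fin n → Option (Fin n)) : Submodule k ↥(pathAlg Q k) :=
  Submodule.span k {v | ∃ s xs t, x s = some xs ∧ Q.Reach xs t ∧ v = aEl Q k t s}

/-- The two-sided ideal `J_i`: the span of all paths of `Q` except the trivial path `e_i`. -/
def J (i : Fin n) : Submodule k ↥(pathAlg Q k) :=
  Submodule.span k {v | ∃ t s, Q.Reach s t ∧ ¬(t = i ∧ s = i) ∧ v = aEl Q k t s}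

/-- The indecomposable direct summand `J_s^{(q)}` of `J_s` corresponding to the connected
component (of `Q` with `s` deleted) containing the neighbour `t` of `s`: the span of all
paths `a_{pq}` with `p, q ∈ Γ^{(t)} ∪ {s}` other than `e_s`. -/
def Jc (s t : Fin n) : Submodule k ↥(pathAlg Q k) :=
  Submodule.span k {v | ∃ p q, Q.Reach q p ∧ p ∈ Q.Gamma s t ∪ {s} ∧ q ∈ Q.Gamma s t ∪ {s} ∧
    ¬(p = s ∧ q = s) ∧ v = aEl Q k p q}

end Algebra

section Tensor

open TensorProduct

/-- The multiplication map `I ⊗_k J → A` for two `k`-subspaces `I`, `J` of a `k`-algebra `A`. -/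
noncomputable def mulMap (k A : Type) [CommRing k] [Ring A] [Algebra k A]
    (I J : Submodule k A) : (↥I ⊗[k] ↥J) →ₗ[k] A :=
  TensorProduct.lift (LinearMap.compl₁₂ (LinearMap.mul k A) I.subtype J.subtype)

/-- The submodule of `I ⊗_k J` spanned by the "balancing" relators `ba ⊗ d - b ⊗ ad`;
the quotient of `I ⊗_k J` by it is `I ⊗_A J`, so the multiplication map
`I ⊗_A J → A` is injective if and only if the kernel of `mulMap` equals `balRel`. -/
noncomputable def balRel (k A : Type) [CommRing k] [Ring A] [Algebra k A]
    (I J : Submodule k A) : Submodule k (↥I ⊗[k] ↥J) :=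
  Submodule.span k {z | ∃ (b : I) (d : J) (a : A) (h1 : (b : A) * a ∈ I) (h2 : a * (d : A) ∈ J),
    z = (⟨(b : A) * a, h1⟩ : I) ⊗ₜ[k] d - (b ⊗ₜ[k] (⟨a * (d : A), h2⟩ : J))}

end Tensor

namespace TreeQuiver

variable {n : ℕ} {Q : TreeQuiver n}

theorem Reach.refl (i : Fin n) : Q.Reach i i := Relation.ReflTransGen.refl

theorem Reach.single {i j : Fin n} (h : Q.arr i j) : Q.Reach i j :=
  Relation.ReflTransGen.single h

theorem Reach.head {i j l : Fin n} (h : Q.arr i j) (h' : Q.Reach j l) : Q.Reach i l :=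
  Relation.ReflTransGen.head h h'

theorem Reach.trans {i j l : Fin n} (h : Q.Reach i j) (h' : Q.Reach j l) : Q.Reach i l :=
  Relation.ReflTransGen.trans h h'

theorem G_adj_of_arr {i j : Fin n} (h : Q.arr i j) : Q.G.Adj i j :=
  ⟨fun hij => Q.loopless i (hij ▸ h), Or.inl h⟩

theorem not_reachable_deleteEdges_of_arr {i j : Fin n} (h : Q.arr i j) :
    ¬ (Q.G.deleteEdges {s(i, j)}).Reachable i j :=
  SimpleGraph.isBridge_iff.mp
    (SimpleGraph.isAcyclic_iff_forall_adj_isBridge.mp Q.isTree.isAcyclic (G_adj_of_arr h))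

/-- `β → μ` is a bridge of the tree, which an oriented path can only cross forwards. -/
theorem Reach.reachable_deleteEdges_or {β μ x y : Fin n} (hβμ : Q.arr β μ) (h : Q.Reach x y) :
    (Q.G.deleteEdges {s(β, μ)}).Reachable x y ∨
      (Q.Reach x β ∧ Q.Reach μ y ∧ (Q.G.deleteEdges {s(β, μ)}).Reachable x β ∧
        (Q.G.deleteEdges {s(β, μ)}).Reachable μ y) := by
  induction h using Relation.ReflTransGen.head_induction_on with
  | refl => exact Or.inl (SimpleGraph.Reachable.refl _)
  | @head a c hac hcy ih =>
    by_cases hedge : s(a, c) = s(β, μ)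
    · rcases Sym2.eq_iff.mp hedge with ⟨rfl, rfl⟩ | ⟨rfl, rfl⟩
      · rcases ih with hcut | ⟨_, _, hcut, _⟩
        · exact Or.inr ⟨.refl _, hcy, SimpleGraph.Reachable.refl _, hcut⟩
        · exact absurd hcut.symm (not_reachable_deleteEdges_of_arr hβμ)
      · exact absurd hβμ (Q.oneway _ _ hac)
    · have hadj : (Q.G.deleteEdges {s(β, μ)}).Adj a c :=
        (SimpleGraph.deleteEdges_adj ..).mpr ⟨G_adj_of_arr hac, by simpa using hedge⟩
      rcases ih with hcut | ⟨h₁, h₂, h₃, h₄⟩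
      · exact Or.inl (hadj.reachable.trans hcut)
      · exact Or.inr ⟨.head hac h₁, h₂, hadj.reachable.trans h₃, h₄⟩

theorem not_reach_of_arr {i j : Fin n} (h : Q.arr i j) : ¬ Q.Reach j i := fun hji => by
  rcases hji.reachable_deleteEdges_or h with hcut | ⟨_, _, hcut, _⟩ <;>
    exact not_reachable_deleteEdges_of_arr h hcut.symm

theorem Reach.antisymm {i j : Fin n} (h : Q.Reach i j) (h' : Q.Reach j i) : i = j := by
  rcases Relation.ReflTransGen.cases_head h with rfl | ⟨c, hic, hcj⟩
  · rfl
  · exact absurd (hcj.trans h') (not_reach_of_arr hic)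

theorem eq_or_eq_of_arr_of_reach {v w m : Fin n} (hvw : Q.arr v w) (h₁ : Q.Reach v m)
    (h₂ : Q.Reach m w) : m = v ∨ m = w := by
  rcases h₁.reachable_deleteEdges_or hvw with hcut₁ | ⟨hmv, hwm, -, -⟩
  · rcases h₂.reachable_deleteEdges_or hvw with hcut₂ | ⟨hmv, -, -, -⟩
    · exact absurd (hcut₁.trans hcut₂) (not_reachable_deleteEdges_of_arr hvw)
    · exact Or.inl (hmv.antisymm h₁)
  · exact Or.inr (h₂.antisymm hwm)

theorem reachable_deleteEdges_of_reach_tail {β μ x : Fin n} (hβμ : Q.arr β μ)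
    (h : Q.Reach x β) : (Q.G.deleteEdges {s(β, μ)}).Reachable x β := by
  rcases h.reachable_deleteEdges_or hβμ with hcut | ⟨-, hμβ, -, -⟩
  · exact hcut
  · exact absurd hμβ (not_reach_of_arr hβμ)

theorem wellFounded_transGen_arr_swap :
    WellFounded (fun x y : Fin n => Relation.TransGen Q.arr y x) := by
  have : IsTrans (Fin n) (fun x y => Relation.TransGen Q.arr y x) :=
    ⟨fun _ _ _ h₁ h₂ => h₂.trans h₁⟩
  have : Std.Irrefl (fun x y : Fin n => Relation.TransGen Q.arr y x) := ⟨fun x h => by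
    obtain ⟨c, hxc, hcx⟩ := Relation.TransGen.head'_iff.mp h
    exact not_reach_of_arr hxc hcx⟩
  exact Finite.wellFounded_of_trans_of_irrefl _

theorem exists_maximal_reach {s : Set (Fin n)} (hs : s.Nonempty) :
    ∃ m ∈ s, ∀ x ∈ s, Q.Reach m x → x = m := by
  obtain ⟨m, hm, hmax⟩ := wellFounded_transGen_arr_swap.has_min s hs
  refine ⟨m, hm, fun x hx hmx => ?_⟩
  rcases Relation.reflTransGen_iff_eq_or_transGen.mp hmx with h | h
  · exact h
  · exact absurd h (hmax x hx)

theorem exists_reach_isSink (v : Fin n) : ∃ t, Q.Reach v t ∧ Q.IsSink t := by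
  obtain ⟨t, hvt, hmax⟩ := exists_maximal_reach (Q := Q) ⟨v, Reach.refl v⟩
  refine ⟨t, hvt, fun x htx => Q.loopless t ?_⟩
  rwa [hmax x (hvt.trans (.single htx)) (.single htx)] at htx

def op (Q : TreeQuiver n) : TreeQuiver n where
  arr := flip Q.arr
  loopless := Q.loopless
  oneway i j := Q.oneway j i
  isTree := by
    convert Q.isTree using 1
    ext x y
    simp only [SimpleGraph.fromRel_adj, flip]
    tauto

theorem G_op : Q.op.G = Q.G := by
  ext x y
  simp only [G, op, SimpleGraph.fromRel_adj, flip]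
  tauto

theorem reach_op {i j : Fin n} : Q.op.Reach i j ↔ Q.Reach j i :=
  Relation.reflTransGen_swap

theorem Admissible.op (h : Q.Admissible) : Q.op.Admissible := fun i hi => by
  rw [deg, G_op] at hi
  exact (h i hi).symm

theorem exists_isSource_reach (v : Fin n) : ∃ s, Q.IsSource s ∧ Q.Reach s v := by
  obtain ⟨s, hvs, hs⟩ := exists_reach_isSink (Q := Q.op) v
  exact ⟨s, hs, reach_op.mp hvs⟩

/-- `w` is not a source, so by admissibility it is a sink or has degree at most 2. -/
theorem Admissible.eq_of_arr_of_arr (hadm : Q.Admissible) {u w x y : Fin n} (huw : Q.arr u w)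
    (hx : Q.arr w x) (hy : Q.arr w y) : x = y := by
  by_contra hxy
  have hux : u ≠ x := by rintro rfl; exact Q.oneway _ _ hx huw
  have huy : u ≠ y := by rintro rfl; exact Q.oneway _ _ hy huw
  have hsub : ({u, x, y} : Set (Fin n)) ⊆ {j | Q.G.Adj w j} := by
    rintro z (rfl | rfl | rfl)
    · exact (G_adj_of_arr huw).symm
    · exact G_adj_of_arr hx
    · exact G_adj_of_arr hy
  have hdeg : 3 ≤ Q.deg w := by
    rw [← Set.ncard_eq_three.mpr ⟨u, x, y, hux, huy, hxy, rfl⟩]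
    exact Set.ncard_le_ncard hsub (Set.toFinite _)
  rcases hadm w hdeg with hsink | hsource
  · exact hsink x hx
  · exact hsource u huw

theorem Admissible.reach_total_of_arr_tail (hadm : Q.Admissible) {u w x y : Fin n}
    (huw : Q.arr u w) (hx : Q.Reach w x) (hy : Q.Reach w y) : Q.Reach x y ∨ Q.Reach y x := by
  induction hx using Relation.ReflTransGen.head_induction_on generalizing u y with
  | refl => exact Or.inl hy
  | @head a c hac hcx ih =>
    rcases Relation.ReflTransGen.cases_head hy with rfl | ⟨y₁, hay₁, hy₁y⟩
    · exact Or.inr (.head hac hcx)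
    · obtain rfl := hadm.eq_of_arr_of_arr huw hay₁ hac
      exact ih hac hy₁y

theorem Admissible.reach_total_of_arr_head (hadm : Q.Admissible) {u w x y : Fin n}
    (hwu : Q.arr w u) (hx : Q.Reach x w) (hy : Q.Reach y w) : Q.Reach x y ∨ Q.Reach y x :=
  (hadm.op.reach_total_of_arr_tail (Q := Q.op) hwu (reach_op.mpr hx)
    (reach_op.mpr hy)).symm.imp reach_op.mp reach_op.mp

/-- A pair `p = (s, t)` stands for the path `a_{ts}` from `s` to `t`. -/
def ExtClosed (Q : TreeQuiver n) (S : Set (Fin n × Fin n)) : Prop :=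
  ∀ p ∈ S, ∀ s t, Q.Reach s p.1 → Q.Reach p.2 t → (s, t) ∈ S

def Nested (Q : TreeQuiver n) (p q : Fin n × Fin n) : Prop :=
  Q.Reach q.1 p.1 ∧ Q.Reach p.2 q.2

/-- The set of paths of an indecomposable ideal (see `isIndecPathSet_pathSet`). -/
structure IsIndecPathSet (Q : TreeQuiver n) (S : Set (Fin n × Fin n)) : Prop where
  reach : ∀ p ∈ S, Q.Reach p.1 p.2
  extClosed : Q.ExtClosed S
  connected : ∀ p ∈ S, ∀ q ∈ S,
    Relation.ReflTransGen (fun x y => x ∈ S ∧ y ∈ S ∧ (Q.Nested x y ∨ Q.Nested y x)) p q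

theorem IsIndecPathSet.op {S : Set (Fin n × Fin n)} (hS : Q.IsIndecPathSet S) :
    Q.op.IsIndecPathSet (Prod.swap ⁻¹' S) where
  reach p hp := reach_op.mpr (hS.reach _ hp)
  extClosed p hp s t hs ht := hS.extClosed _ hp t s (reach_op.mp ht) (reach_op.mp hs)
  connected p hp q hq := by
    refine Relation.ReflTransGen.lift Prod.swap (fun x y => ?_) _ _ (hS.connected _ hp _ hq)
    rintro ⟨hx, hy, ⟨h₁, h₂⟩ | ⟨h₁, h₂⟩⟩
    · exact ⟨hx, hy, Or.inl ⟨reach_op.mpr h₂, reach_op.mpr h₁⟩⟩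
    · exact ⟨hx, hy, Or.inr ⟨reach_op.mpr h₂, reach_op.mpr h₁⟩⟩

/-- Nesting moves sources only along oriented paths, so they cannot cross the bridge `β → μ`
without one of them lying beyond `μ`. -/
theorem IsIndecPathSet.reachable_deleteEdges_fst {S : Set (Fin n × Fin n)}
    (hS : Q.IsIndecPathSet S) {β μ : Fin n} (hβμ : Q.arr β μ)
    (hμ : ∀ p ∈ S, ¬ Q.Reach μ p.1)
    {a : Fin n × Fin n} (ha : a ∈ S) (haβ : Q.Reach a.1 β) :
    ∀ p ∈ S, (Q.G.deleteEdges {s(β, μ)}).Reachable p.1 β := by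
  intro p hp
  have hconn := hS.connected a ha p hp
  clear hp
  induction hconn with
  | refl => exact reachable_deleteEdges_of_reach_tail hβμ haβ
  | @tail x y _ hstep ih =>
    obtain ⟨-, hy, ⟨hyx, -⟩ | ⟨hxy, -⟩⟩ := hstep
    · rcases hyx.reachable_deleteEdges_or hβμ with hcut | ⟨-, -, hcut, -⟩
      · exact hcut.trans ih
      · exact hcut
    · rcases hxy.reachable_deleteEdges_or hβμ with hcut | ⟨-, hμy, -, -⟩
      · exact hcut.symm.trans ih
      · exact absurd hμy (hμ y hy)

theorem IsIndecPathSet.reachable_deleteEdges_snd {S : Set (Fin n × Fin n)}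
    (hS : Q.IsIndecPathSet S) {β μ : Fin n} (hβμ : Q.arr β μ)
    (hβ : ∀ p ∈ S, ¬ Q.Reach p.2 β)
    {c : Fin n × Fin n} (hc : c ∈ S) (hμc : Q.Reach μ c.2) :
    ∀ p ∈ S, (Q.G.deleteEdges {s(β, μ)}).Reachable μ p.2 := by
  intro p hp
  have h := hS.op.reachable_deleteEdges_fst (β := μ) (μ := β) hβμ
    (fun q hq hβq => hβ _ hq (reach_op.mp hβq)) (a := c.swap) hc (reach_op.mpr hμc) p.swap hp
  rwa [G_op, Sym2.eq_swap, SimpleGraph.reachable_comm] at h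

/-- The pairs `(s, t)` with `a_{ts} = a_{tm} a_{ms}` for some `(m, t) ∈ SB`, `(s, m) ∈ SD`. -/
def pathMul (SB SD : Set (Fin n × Fin n)) : Set (Fin n × Fin n) :=
  {p | ∃ m, (m, p.2) ∈ SB ∧ (p.1, m) ∈ SD}

variable {SB SD : Set (Fin n × Fin n)}

theorem ExtClosed.pathMul (hSB : Q.ExtClosed SB) (hSD : Q.ExtClosed SD) :
    Q.ExtClosed (pathMul SB SD) := by
  rintro p ⟨m, hB, hD⟩ s t hs ht
  exact ⟨m, hSB _ hB m t (.refl m) ht, hSD _ hD s m hs (.refl m)⟩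

theorem pathMul_subset_left (hSB : Q.ExtClosed SB) (hSD : ∀ p ∈ SD, Q.Reach p.1 p.2) :
    pathMul SB SD ⊆ SB := by
  rintro p ⟨m, hB, hD⟩
  exact hSB _ hB p.1 p.2 (hSD _ hD) (.refl _)

theorem pathMul_subset_right (hSB : ∀ p ∈ SB, Q.Reach p.1 p.2) (hSD : Q.ExtClosed SD) :
    pathMul SB SD ⊆ SD := by
  rintro p ⟨m, hB, hD⟩
  exact hSD _ hD p.1 p.2 (.refl _) (hSB _ hB)

theorem pathMul_swap : pathMul (Prod.swap ⁻¹' SD) (Prod.swap ⁻¹' SB) =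
    Prod.swap ⁻¹' pathMul SB SD := by
  ext p
  exact exists_congr fun _ => and_comm

/-- The sources of `SB` lie on the tail side of the bridge `β → μ` and the targets of `SD` on
its head side, so no vertex is both. -/
theorem pathMul_eq_empty_of_separated (hSB : Q.IsIndecPathSet SB) (hSD : Q.IsIndecPathSet SD)
    {β μ : Fin n} (hβμ : Q.arr β μ)
    (hB : ∀ p ∈ SB, ¬ Q.Reach μ p.1) {a : Fin n × Fin n} (ha : a ∈ SB) (haβ : Q.Reach a.1 β)
    (hD : ∀ p ∈ SD, ¬ Q.Reach p.2 β) {c : Fin n × Fin n} (hc : c ∈ SD) (hμc : Q.Reach μ c.2) :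
    pathMul SB SD = ∅ := by
  refine Set.eq_empty_of_forall_notMem fun p ⟨m, hmB, hmD⟩ => ?_
  exact not_reachable_deleteEdges_of_arr hβμ
    ((hSB.reachable_deleteEdges_fst hβμ hB ha haβ _ hmB).symm.trans
      (hSD.reachable_deleteEdges_snd hβμ hD hc hμc _ hmD).symm)

def Covers (Q : TreeQuiver n) (S : Set (Fin n × Fin n)) (i j : Fin n) : Prop :=
  ∃ p ∈ S, Q.Reach p.1 i ∧ Q.Reach j p.2

theorem Covers.mono {S T : Set (Fin n × Fin n)} {i j : Fin n} (hST : S ⊆ T)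
    (h : Q.Covers S i j) : Q.Covers T i j :=
  let ⟨p, hp, hpi, hjp⟩ := h
  ⟨p, hST hp, hpi, hjp⟩

theorem covers_op_swap {S : Set (Fin n × Fin n)} {i j : Fin n} :
    Q.op.Covers (Prod.swap ⁻¹' S) j i ↔ Q.Covers S i j :=
  ⟨fun ⟨p, hp, hpj, hip⟩ => ⟨p.swap, hp, reach_op.mp hip, reach_op.mp hpj⟩,
    fun ⟨p, hp, hpi, hjp⟩ => ⟨p.swap, hp, reach_op.mpr hjp, reach_op.mpr hpi⟩⟩

theorem forall_not_reach_snd_of_pathMul (hadm : Q.Admissible) (hSB : Q.ExtClosed SB)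
    (hSD : Q.IsIndecPathSet SD) {i j w : Fin n} (hiw : Q.arr i w) (hjw : Q.Reach j w)
    (hD : ∀ p ∈ SD, ¬ Q.Reach p.2 i)
    (hmul : ∀ s m t, (m, t) ∈ SB → (s, m) ∈ SD → Q.Reach s i → ¬ Q.Reach j m)
    {β μ t : Fin n} (hβμ : Q.arr β μ) (hwβ : Q.Reach w β) (hβt : (β, t) ∈ SB) :
    ∀ p ∈ SD, ¬ Q.Reach p.2 β := by
  rintro ⟨s, m⟩ hsm hmβ
  have hiβ : Q.Reach i β := .head hiw hwβ
  have him : Q.Reach i m := (hadm.reach_total_of_arr_head hβμ hmβ hiβ).resolve_left (hD _ hsm)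
  have hwm : Q.Reach w m := by
    rcases hadm.reach_total_of_arr_head hβμ hmβ hwβ with hmw | hwm
    · rcases eq_or_eq_of_arr_of_reach hiw him hmw with rfl | rfl
      · exact absurd (.refl _) (hD _ hsm)
      · exact .refl _
    · exact hwm
  have hmt : (m, t) ∈ SB := hSB _ hβt m t hmβ (.refl t)
  rcases hadm.reach_total_of_arr_head hβμ ((hSD.reach _ hsm).trans hmβ) hiβ with hsi | his
  · exact hmul s m t hmt hsm hsi (hjw.trans hwm)
  · exact hmul i m t hmt (hSD.extClosed _ hsm i m his (.refl m)) (.refl i) (hjw.trans hwm)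

/-- Let `w` be the first step beyond `i` towards `j`, or towards the target of a path of `SD`.
For `β` maximal among the sources of `SB` beyond `w`, the bridge `β → μ` towards that target
(or `i → w` if there is no such source) separates the sources of `SB` from the targets of
`SD`. -/
theorem exists_pathMul_of_forall_not_reach_snd (hadm : Q.Admissible)
    (hSB : Q.IsIndecPathSet SB) (hSD : Q.IsIndecPathSet SD) (hmul : (pathMul SB SD).Nonempty)
    {i j : Fin n} (hij : Q.arr i j ∨ i = j) (hBc : Q.Covers SB i j) (hDc : Q.Covers SD i j)
    (hD : ∀ p ∈ SD, ¬ Q.Reach p.2 i) :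
    ∃ s m t, (m, t) ∈ SB ∧ (s, m) ∈ SD ∧ Q.Reach s i ∧ Q.Reach j m := by
  by_contra! hF
  obtain ⟨a, ha, hai, -⟩ := hBc
  obtain ⟨c, hc, hci, hjc⟩ := hDc
  obtain ⟨w, hiw, hwc, hjw⟩ : ∃ w, Q.arr i w ∧ Q.Reach w c.2 ∧ Q.Reach j w := by
    rcases hij with hij | rfl
    · exact ⟨j, hij, hjc, .refl j⟩
    · rcases Relation.ReflTransGen.cases_head hjc with hic | ⟨w, hiw, hwc⟩
      · exact absurd (hic ▸ .refl i) (hD c hc)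
      · exact ⟨w, hiw, hwc, .single hiw⟩
  by_cases hstart : ∃ p ∈ SB, Q.Reach w p.1
  · obtain ⟨β, ⟨⟨t, hβt⟩, hwβ⟩, hβmax⟩ := exists_maximal_reach (Q := Q)
      (s := {m | (∃ t, (m, t) ∈ SB) ∧ Q.Reach w m})
      (let ⟨p, hp, hwp⟩ := hstart; ⟨p.1, ⟨p.2, hp⟩, hwp⟩)
    have hcβ : ¬ Q.Reach c.2 β := fun hcβ =>
      hF c.1 β t hβt (hSD.extClosed c hc c.1 β (.refl _) hcβ) hci (hjw.trans hwβ)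
    obtain ⟨μ, hβμ, hμc⟩ : ∃ μ, Q.arr β μ ∧ Q.Reach μ c.2 := by
      rcases Relation.ReflTransGen.cases_head
        ((hadm.reach_total_of_arr_tail hiw hwc hwβ).resolve_left hcβ) with hβc | hβμc
      · exact absurd (hβc ▸ .refl β) hcβ
      · exact hβμc
    have hB : ∀ p ∈ SB, ¬ Q.Reach μ p.1 := fun p hp hμp => by
      have hβp : Q.Reach β p.1 := .head hβμ hμp
      rw [hβmax p.1 ⟨⟨p.2, hp⟩, hwβ.trans hβp⟩ hβp] at hμp
      exact not_reach_of_arr hβμ hμp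
    exact hmul.ne_empty (pathMul_eq_empty_of_separated hSB hSD hβμ hB ha
      (hai.trans (.head hiw hwβ))
      (forall_not_reach_snd_of_pathMul hadm hSB.extClosed hSD hiw hjw hD hF hβμ hwβ hβt)
      hc hμc)
  · push Not at hstart
    exact hmul.ne_empty (pathMul_eq_empty_of_separated hSB hSD hiw hstart ha hai hD hc hwc)

theorem exists_pathMul_of_forall_not_reach_fst (hadm : Q.Admissible)
    (hSB : Q.IsIndecPathSet SB) (hSD : Q.IsIndecPathSet SD) (hmul : (pathMul SB SD).Nonempty)
    {i j : Fin n} (hij : Q.arr i j ∨ i = j) (hBc : Q.Covers SB i j) (hDc : Q.Covers SD i j)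
    (hB : ∀ p ∈ SB, ¬ Q.Reach j p.1) :
    ∃ s m t, (m, t) ∈ SB ∧ (s, m) ∈ SD ∧ Q.Reach m i ∧ Q.Reach j t := by
  have hmul' : (pathMul (Prod.swap ⁻¹' SD) (Prod.swap ⁻¹' SB)).Nonempty := by
    rw [pathMul_swap]
    exact hmul.preimage Prod.swap_surjective
  obtain ⟨t, m, s, hmt, hsm, htj, him⟩ := exists_pathMul_of_forall_not_reach_snd hadm.op
    hSD.op hSB.op hmul' (hij.imp id Eq.symm) (covers_op_swap.mpr hDc) (covers_op_swap.mpr hBc)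
    (fun p hp hpj => hB _ hp (reach_op.mp hpj))
  exact ⟨s, m, t, hsm, hmt, reach_op.mp him, reach_op.mp htj⟩

theorem covers_pathMul_iff (hadm : Q.Admissible) (hSB : Q.IsIndecPathSet SB)
    (hSD : Q.IsIndecPathSet SD) (hmul : (pathMul SB SD).Nonempty) {i j : Fin n}
    (hij : Q.arr i j ∨ i = j) :
    Q.Covers (pathMul SB SD) i j ↔ Q.Covers SB i j ∧ Q.Covers SD i j := by
  refine ⟨fun h => ⟨h.mono (pathMul_subset_left hSB.extClosed hSD.reach),
    h.mono (pathMul_subset_right hSB.reach hSD.extClosed)⟩, fun ⟨hBc, hDc⟩ => ?_⟩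
  have hij' : Q.Reach i j := hij.elim .single fun h => h ▸ .refl i
  by_cases hDi : ∃ q ∈ SD, Q.Reach q.2 i
  · obtain ⟨q, hq, hqi⟩ := hDi
    by_cases hBj : ∃ p ∈ SB, Q.Reach j p.1
    · obtain ⟨p, hp, hjp⟩ := hBj
      exact ⟨(q.1, p.2), ⟨p.1, hp, hSD.extClosed q hq q.1 p.1 (.refl _) (hqi.trans
        (hij'.trans hjp))⟩, (hSD.reach q hq).trans hqi, hjp.trans (hSB.reach p hp)⟩
    · push Not at hBj
      obtain ⟨s, m, t, hmt, hsm, hmi, hjt⟩ :=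
        exists_pathMul_of_forall_not_reach_fst hadm hSB hSD hmul hij hBc hDc hBj
      exact ⟨(s, t), ⟨m, hmt, hsm⟩, (hSD.reach _ hsm).trans hmi, hjt⟩
  · push Not at hDi
    obtain ⟨s, m, t, hmt, hsm, hsi, hjm⟩ :=
      exists_pathMul_of_forall_not_reach_snd hadm hSB hSD hmul hij hBc hDc hDi
    exact ⟨(s, t), ⟨m, hmt, hsm⟩, hsi, hjm.trans (hSB.reach _ hmt)⟩

def maxChains (Q : TreeQuiver n) (S : Set (Fin n × Fin n)) : Set (Fin n × Fin n) :=
  {c | Q.IsMaxChain c.1 c.2 ∧ c ∈ S}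

theorem Covers.exists_maxChains {S : Set (Fin n × Fin n)} (hS : Q.ExtClosed S) {i j : Fin n}
    (hij : Q.Reach i j) (h : Q.Covers S i j) :
    ∃ c ∈ Q.maxChains S, Q.Reach c.1 i ∧ Q.Reach j c.2 := by
  obtain ⟨p, hp, hpi, hjp⟩ := h
  obtain ⟨s, hs, hsp⟩ := exists_isSource_reach (Q := Q) p.1
  obtain ⟨t, hpt, ht⟩ := exists_reach_isSink (Q := Q) p.2
  exact ⟨(s, t), ⟨⟨hs, ht, hsp.trans (hpi.trans (hij.trans (hjp.trans hpt)))⟩,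
    hS p hp s t hsp hpt⟩, hsp.trans hpi, hjp.trans hpt⟩

theorem mem_suppVerts_maxChains_iff {S : Set (Fin n × Fin n)} (hS : Q.ExtClosed S) (v : Fin n) :
    v ∈ Q.suppVerts (Q.maxChains S) ↔ Q.Covers S v v :=
  ⟨fun ⟨c, hc, hcv⟩ => ⟨c, hc.2, hcv⟩, fun h => h.exists_maxChains hS (.refl v)⟩

theorem suppAdj_maxChains_iff {S : Set (Fin n × Fin n)} (hS : Q.ExtClosed S) {i j : Fin n}
    (hij : Q.arr i j) : Q.suppAdj (Q.maxChains S) i j ↔ Q.Covers S i j := by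
  refine ⟨fun ⟨_, c, hc, ⟨hci, _⟩, _, hjc⟩ => ⟨c, hc.2, hci, hjc⟩, fun h => ?_⟩
  obtain ⟨c, hc, hci, hjc⟩ := h.exists_maxChains hS (.single hij)
  exact ⟨G_adj_of_arr hij, c, hc, ⟨hci, .head hij hjc⟩, ⟨hci.trans (.single hij), hjc⟩⟩

theorem suppAdj_comm {S : Set (Fin n × Fin n)} {i j : Fin n} :
    Q.suppAdj S i j ↔ Q.suppAdj S j i := by
  constructor <;> exact fun ⟨hadj, c, hc, hi, hj⟩ => ⟨hadj.symm, c, hc, hj, hi⟩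

theorem suppVerts_maxChains_pathMul (hadm : Q.Admissible) (hSB : Q.IsIndecPathSet SB)
    (hSD : Q.IsIndecPathSet SD) (hmul : (pathMul SB SD).Nonempty) :
    Q.suppVerts (Q.maxChains (pathMul SB SD)) =
      Q.suppVerts (Q.maxChains SB) ∩ Q.suppVerts (Q.maxChains SD) := by
  ext v
  rw [Set.mem_inter_iff, mem_suppVerts_maxChains_iff (hSB.extClosed.pathMul hSD.extClosed),
    mem_suppVerts_maxChains_iff hSB.extClosed, mem_suppVerts_maxChains_iff hSD.extClosed]
  exact covers_pathMul_iff hadm hSB hSD hmul (Or.inr rfl)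

theorem suppAdj_maxChains_pathMul (hadm : Q.Admissible) (hSB : Q.IsIndecPathSet SB)
    (hSD : Q.IsIndecPathSet SD) (hmul : (pathMul SB SD).Nonempty) (i j : Fin n) :
    Q.suppAdj (Q.maxChains (pathMul SB SD)) i j ↔
      Q.suppAdj (Q.maxChains SB) i j ∧ Q.suppAdj (Q.maxChains SD) i j := by
  have key {i j : Fin n} (hij : Q.arr i j) :
      Q.suppAdj (Q.maxChains (pathMul SB SD)) i j ↔
        Q.suppAdj (Q.maxChains SB) i j ∧ Q.suppAdj (Q.maxChains SD) i j := by
    rw [suppAdj_maxChains_iff (hSB.extClosed.pathMul hSD.extClosed) hij,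
      suppAdj_maxChains_iff hSB.extClosed hij, suppAdj_maxChains_iff hSD.extClosed hij]
    exact covers_pathMul_iff hadm hSB hSD hmul (Or.inl hij)
  by_cases hadj : Q.G.Adj i j
  · rcases hadj.2 with hij | hji
    · exact key hij
    · simpa only [suppAdj_comm (i := i)] using key hji
  · exact iff_of_false (fun h => hadj h.1) (fun h => hadj h.1.1)

end TreeQuiver

open TreeQuiver

section PathSets

variable {n : ℕ} {Q : TreeQuiver n} {k : Type} [Field k]

theorem reach_of_apply_ne_zero (x : pathAlg Q k) {t s : Fin n}
    (h : (x : Matrix (Fin n) (Fin n) k) t s ≠ 0) : Q.Reach s t :=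
  by_contra fun hst => h (x.2 t s hst)

theorem exists_apply_ne_zero {x : pathAlg Q k} (hx : x ≠ 0) :
    ∃ t s, (x : Matrix (Fin n) (Fin n) k) t s ≠ 0 := by
  by_contra! h
  exact hx (Subtype.ext (Matrix.ext h))

theorem exists_apply_ne_zero_of_mul_apply_ne_zero {x y : pathAlg Q k} {t s : Fin n}
    (h : ((x * y : pathAlg Q k) : Matrix (Fin n) (Fin n) k) t s ≠ 0) :
    ∃ m, (x : Matrix (Fin n) (Fin n) k) t m ≠ 0 ∧
      (y : Matrix (Fin n) (Fin n) k) m s ≠ 0 := by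
  rw [MulMemClass.coe_mul, Matrix.mul_apply] at h
  obtain ⟨m, -, hm⟩ := Finset.exists_ne_zero_of_sum_ne_zero h
  exact ⟨m, left_ne_zero_of_mul hm, right_ne_zero_of_mul hm⟩

theorem coe_aEl {t s : Fin n} (h : Q.Reach s t) :
    (aEl Q k t s : Matrix (Fin n) (Fin n) k) = Matrix.single t s 1 := by
  rw [aEl, dif_pos h]

theorem aEl_ne_zero {t s : Fin n} (h : Q.Reach s t) : aEl Q k t s ≠ 0 := fun h0 => by
  simpa [coe_aEl h] using congrArg (fun x : pathAlg Q k => (x : Matrix _ _ k) t s) h0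

theorem aEl_mul_aEl {t m s : Fin n} (htm : Q.Reach m t) (hms : Q.Reach s m) :
    aEl Q k t m * aEl Q k m s = aEl Q k t s :=
  Subtype.ext <| by
    rw [MulMemClass.coe_mul, coe_aEl htm, coe_aEl hms, coe_aEl (hms.trans htm),
      Matrix.single_mul_single_same, one_mul]

theorem e_mul_mul_e (x : pathAlg Q k) {t s : Fin n} (h : Q.Reach s t) :
    e Q k t * x * e Q k s = (x : Matrix (Fin n) (Fin n) k) t s • aEl Q k t s :=
  Subtype.ext <| by simp [e, coe_aEl h, Matrix.smul_single]

theorem sum_smul_aEl (x : pathAlg Q k) :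
    ∑ t, ∑ s, (x : Matrix (Fin n) (Fin n) k) t s • aEl Q k t s = x := by
  refine Subtype.ext ?_
  conv_rhs => rw [Matrix.matrix_eq_sum_single (x : Matrix (Fin n) (Fin n) k)]
  push_cast
  refine Finset.sum_congr rfl fun t _ => Finset.sum_congr rfl fun s _ => ?_
  by_cases h : Q.Reach s t
  · rw [coe_aEl h, Matrix.smul_single, smul_eq_mul, mul_one]
  · rw [x.2 t s h, zero_smul, Matrix.single_zero]

variable (Q k) in
/-- The entry at `(t, s)` is the coefficient of `a_{ts}`, so it is indexed by the pair `(s, t)`. -/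
def supportedOn (T : Set (Fin n × Fin n)) : Submodule k (pathAlg Q k) where
  carrier := {x | ∀ t s, (x : Matrix (Fin n) (Fin n) k) t s ≠ 0 → (s, t) ∈ T}
  add_mem' {x y} hx hy t s h := by
    by_cases hxts : (x : Matrix (Fin n) (Fin n) k) t s = 0
    · exact hy t s (by simpa [hxts] using h)
    · exact hx t s hxts
  zero_mem' t s h := absurd rfl h
  smul_mem' c x hx t s h := hx t s (right_ne_zero_of_mul h)

theorem supportedOn_mono {T U : Set (Fin n × Fin n)} (h : T ⊆ U) :
    supportedOn Q k T ≤ supportedOn Q k U :=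
  fun _ hx t s hts => h (hx t s hts)

theorem aEl_mem_supportedOn {T : Set (Fin n × Fin n)} {t s : Fin n} (h : (s, t) ∈ T) :
    aEl Q k t s ∈ supportedOn Q k T := by
  intro t' s' h'
  by_cases hst : Q.Reach s t
  · rw [coe_aEl hst, Matrix.single_apply] at h'
    obtain ⟨rfl, rfl⟩ := (ite_ne_right_iff.mp h').1
    exact h
  · simp [aEl, hst] at h'

theorem supportedOn_le {T : Set (Fin n × Fin n)} {M : Submodule k (pathAlg Q k)}
    (h : ∀ p ∈ T, aEl Q k p.2 p.1 ∈ M) : supportedOn Q k T ≤ M := fun x hx => by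
  rw [← sum_smul_aEl x]
  refine M.sum_mem fun t _ => M.sum_mem fun s _ => ?_
  by_cases hts : (x : Matrix (Fin n) (Fin n) k) t s = 0
  · rw [hts, zero_smul]
    exact M.zero_mem
  · exact M.smul_mem _ (h (s, t) (hx t s hts))

theorem supportedOn_union (T U : Set (Fin n × Fin n)) :
    supportedOn Q k (T ∪ U) = supportedOn Q k T ⊔ supportedOn Q k U :=
  le_antisymm
    (supportedOn_le fun _ hp => hp.elim (fun h => Submodule.mem_sup_left (aEl_mem_supportedOn h))
      (fun h => Submodule.mem_sup_right (aEl_mem_supportedOn h)))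
    (sup_le (supportedOn_mono Set.subset_union_left) (supportedOn_mono Set.subset_union_right))

theorem supportedOn_inf (T U : Set (Fin n × Fin n)) :
    supportedOn Q k T ⊓ supportedOn Q k U = supportedOn Q k (T ∩ U) :=
  le_antisymm (fun _ ⟨hT, hU⟩ t s h => ⟨hT t s h, hU t s h⟩)
    (le_inf (supportedOn_mono Set.inter_subset_left) (supportedOn_mono Set.inter_subset_right))

theorem supportedOn_empty : supportedOn Q k ∅ = ⊥ :=
  eq_bot_iff.mpr fun _ hx => by_contra fun hx0 =>
    let ⟨t, s, h⟩ := exists_apply_ne_zero hx0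
    hx t s h

theorem eq_empty_of_supportedOn_eq_bot {T : Set (Fin n × Fin n)}
    (hT : ∀ p ∈ T, Q.Reach p.1 p.2) (h : supportedOn Q k T = ⊥) : T = ∅ :=
  Set.eq_empty_of_forall_notMem fun p hp =>
    aEl_ne_zero (hT p hp) ((Submodule.mem_bot k).mp (h ▸ aEl_mem_supportedOn hp))

theorem isIdeal_supportedOn {T : Set (Fin n × Fin n)} (hT : Q.ExtClosed T) :
    IsIdeal Q k (supportedOn Q k T) := by
  constructor
  · intro a x hx t s h
    obtain ⟨m, ha, hx'⟩ := exists_apply_ne_zero_of_mul_apply_ne_zero h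
    exact hT _ (hx m s hx') s t (.refl s) (reach_of_apply_ne_zero a ha)
  · intro a x hx t s h
    obtain ⟨m, hx', ha⟩ := exists_apply_ne_zero_of_mul_apply_ne_zero h
    exact hT _ (hx t m hx') s t (reach_of_apply_ne_zero a ha) (.refl t)

variable (Q k) in
def pathSet (B : Submodule k (pathAlg Q k)) : Set (Fin n × Fin n) :=
  {p | Q.Reach p.1 p.2 ∧ aEl Q k p.2 p.1 ∈ B}

theorem extClosed_pathSet {B : Submodule k (pathAlg Q k)} (hB : IsIdeal Q k B) :
    Q.ExtClosed (pathSet Q k B) := by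
  rintro ⟨p₁, p₂⟩ ⟨hp, hpB⟩ s t hs ht
  refine ⟨hs.trans (hp.trans ht), ?_⟩
  have h := hB.1 (aEl Q k t p₂) _ (hB.2 (aEl Q k p₁ s) _ hpB)
  rwa [aEl_mul_aEl hp hs, aEl_mul_aEl ht (hs.trans hp)] at h

theorem mem_pathSet_of_apply_ne_zero {B : Submodule k (pathAlg Q k)} (hB : IsIdeal Q k B)
    {x : pathAlg Q k} (hx : x ∈ B) {t s : Fin n} (h : (x : Matrix (Fin n) (Fin n) k) t s ≠ 0) :
    (s, t) ∈ pathSet Q k B := by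
  have hst := reach_of_apply_ne_zero x h
  refine ⟨hst, ?_⟩
  have hmem := hB.2 (e Q k s) _ (hB.1 (e Q k t) x hx)
  rw [e_mul_mul_e x hst] at hmem
  simpa [smul_smul, inv_mul_cancel₀ h] using
    B.smul_mem ((x : Matrix (Fin n) (Fin n) k) t s)⁻¹ hmem

theorem supportedOn_pathSet {B : Submodule k (pathAlg Q k)} (hB : IsIdeal Q k B) :
    supportedOn Q k (pathSet Q k B) = B :=
  le_antisymm (supportedOn_le fun _ hp => hp.2)
    fun _ hx _ _ h => mem_pathSet_of_apply_ne_zero hB hx h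

/-- A splitting of the paths of `B` into two extension-closed parts splits `B` into a direct
sum of two ideals. -/
theorem eq_empty_or_eq_empty_of_indec {B : Submodule k (pathAlg Q k)} (hB : Indec Q k B)
    {T U : Set (Fin n × Fin n)} (hT : Q.ExtClosed T) (hU : Q.ExtClosed U)
    (hTU : T ∪ U = pathSet Q k B) (hdisj : Disjoint T U) : T = ∅ ∨ U = ∅ := by
  have hreach : ∀ p ∈ T ∪ U, Q.Reach p.1 p.2 := fun p hp => (hTU ▸ hp).1
  refine (hB.2.2 _ _ (isIdeal_supportedOn hT) (isIdeal_supportedOn hU)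
    (by rw [← supportedOn_union, hTU, supportedOn_pathSet hB.1])
    (by rw [supportedOn_inf, hdisj.inter_eq, supportedOn_empty])).imp
    (eq_empty_of_supportedOn_eq_bot fun p hp => hreach p (Or.inl hp))
    (eq_empty_of_supportedOn_eq_bot fun p hp => hreach p (Or.inr hp))

theorem isIndecPathSet_pathSet {B : Submodule k (pathAlg Q k)} (hB : Indec Q k B) :
    Q.IsIndecPathSet (pathSet Q k B) := by
  refine ⟨fun _ hp => hp.1, extClosed_pathSet hB.1, fun p hp q hq => by_contra fun hpq => ?_⟩
  set S := pathSet Q k B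
  set R :=
    Relation.ReflTransGen (fun x y => x ∈ S ∧ y ∈ S ∧ (Q.Nested x y ∨ Q.Nested y x)) p
  have hS := extClosed_pathSet hB.1
  have hcomp : Q.ExtClosed {x | x ∈ S ∧ R x} := fun x hx s t hs ht =>
    ⟨hS x hx.1 s t hs ht, hx.2.tail ⟨hx.1, hS x hx.1 s t hs ht, Or.inl ⟨hs, ht⟩⟩⟩
  have hrest : Q.ExtClosed {x | x ∈ S ∧ ¬ R x} := fun x hx s t hs ht =>
    ⟨hS x hx.1 s t hs ht,
      fun hR => hx.2 (hR.tail ⟨hS x hx.1 s t hs ht, hx.1, Or.inr ⟨hs, ht⟩⟩)⟩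
  rcases eq_empty_or_eq_empty_of_indec hB hcomp hrest
    (Set.ext fun x => ⟨fun h => h.elim And.left And.left,
      fun hx => (em (R x)).imp (fun h => ⟨hx, h⟩) (fun h => ⟨hx, h⟩)⟩)
    (Set.disjoint_left.mpr fun x hx hx' => hx'.2 hx.2) with h | h
  · exact (Set.eq_empty_iff_forall_notMem.mp h) p ⟨hp, .refl⟩
  · exact (Set.eq_empty_iff_forall_notMem.mp h) q ⟨hq, hpq⟩

theorem mul_le_supportedOn_pathMul {B D : Submodule k (pathAlg Q k)} (hB : IsIdeal Q k B)
    (hD : IsIdeal Q k D) : B * D ≤ supportedOn Q k (pathMul (pathSet Q k B) (pathSet Q k D)) :=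
  Submodule.mul_le.mpr fun _ hb _ hd _ _ h =>
    let ⟨m, hbm, hdm⟩ := exists_apply_ne_zero_of_mul_apply_ne_zero h
    ⟨m, mem_pathSet_of_apply_ne_zero hB hb hbm, mem_pathSet_of_apply_ne_zero hD hd hdm⟩

theorem pathSet_mul {B D : Submodule k (pathAlg Q k)} (hB : IsIdeal Q k B) (hD : IsIdeal Q k D) :
    pathSet Q k (B * D) = pathMul (pathSet Q k B) (pathSet Q k D) := by
  ext ⟨s, t⟩
  refine ⟨fun ⟨hst, hmem⟩ => mul_le_supportedOn_pathMul hB hD hmem t s ?_,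
    fun ⟨m, ⟨hmt, hB'⟩, ⟨hsm, hD'⟩⟩ => ⟨hsm.trans hmt, ?_⟩⟩
  · simp [coe_aEl hst]
  · rw [← aEl_mul_aEl hmt hsm]
    exact Submodule.mul_mem_mul hB' hD'

theorem pathMul_pathSet_nonempty {B D : Submodule k (pathAlg Q k)} (hB : IsIdeal Q k B)
    (hD : IsIdeal Q k D) (hBD : B * D ≠ ⊥) :
    (pathMul (pathSet Q k B) (pathSet Q k D)).Nonempty := by
  obtain ⟨x, hx, hx0⟩ := (Submodule.ne_bot_iff _).mp hBD
  obtain ⟨t, s, h⟩ := exists_apply_ne_zero hx0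
  exact ⟨(s, t), mul_le_supportedOn_pathMul hB hD hx t s h⟩

theorem suppB_eq_maxChains_pathSet (B : Submodule k (pathAlg Q k)) :
    suppB Q k B = Q.maxChains (pathSet Q k B) :=
  Set.ext fun _ =>
    ⟨fun ⟨hc, hB⟩ => ⟨hc, hc.2.2, hB⟩, fun ⟨hc, _, hB⟩ => ⟨hc, hB⟩⟩

end PathSets

theorem statement1_general {n : ℕ} (k : Type) [Field k]
    (Q : TreeQuiver n) (hadm : Q.Admissible)
    (B D : Submodule k ↥(pathAlg Q k)) (hB : Indec Q k B) (hD : Indec Q k D)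
    (hBD : B * D ≠ ⊥) :
    Q.suppVerts (suppB Q k (B * D)) = Q.suppVerts (suppB Q k B) ∩ Q.suppVerts (suppB Q k D) ∧
    ∀ i j, Q.suppAdj (suppB Q k (B * D)) i j ↔
      (Q.suppAdj (suppB Q k B) i j ∧ Q.suppAdj (suppB Q k D) i j) := by
  have hSB := isIndecPathSet_pathSet hB
  have hSD := isIndecPathSet_pathSet hD
  have hmul := pathMul_pathSet_nonempty hB.1 hD.1 hBD
  simp only [suppB_eq_maxChains_pathSet, pathSet_mul hB.1 hD.1]
  exact ⟨suppVerts_maxChains_pathMul hadm hSB hSD hmul,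
    suppAdj_maxChains_pathMul hadm hSB hSD hmul⟩

/-- If `B`, `D` are indecomposable sub-bimodules of `A` with `BD ≠ 0`, then
`supp(BD) = supp(B) ∩ supp(D)` (as subgraphs of `Q`, i.e. the vertex set of `supp(BD)`
is the intersection of the vertex sets, and its edges are exactly the common edges). -/
theorem statement1 {n : ℕ} (k : Type) [Field k] [IsAlgClosed k] (hn : 1 < n)
    (Q : TreeQuiver n) (hadm : Q.Admissible) (hK' : ∃ s, Q.inK' s)
    (B D : Submodule k ↥(pathAlg Q k)) (hB : Indec Q k B) (hD : Indec Q k D)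
    (hBD : B * D ≠ ⊥) :
    Q.suppVerts (suppB Q k (B * D)) = Q.suppVerts (suppB Q k B) ∩ Q.suppVerts (suppB Q k D) ∧
    ∀ i j, Q.suppAdj (suppB Q k (B * D)) i j ↔
      (Q.suppAdj (suppB Q k B) i j ∧ Q.suppAdj (suppB Q k D) i j) :=
  statement1_general k Q hadm B D hB hD hBD

end DPF
end

section
/- Let A be a finite-dimensional associative unital algebra over an algebraically closed field k. If dim_k Hom_A(P, P') ≤ 1 for every pair P, P' of indecomposable projective left A-modules, then A has only finitely many two-sided ideals (indeed at most 2^{dim_k A}). -/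
/-!
Write `1 = ∑ eᵢ` as a sum of orthogonal primitive idempotents, which is possible because `A` is
Artinian. Each `Aeᵢ` is an indecomposable projective module, and evaluation at `eᵢ` maps
`Hom_A(Aeᵢ, Aeⱼ)` onto the Peirce component `eᵢAeⱼ`, which is therefore at most one-dimensional.
Hence a two-sided ideal `I` either contains `eᵢAeⱼ` or meets it trivially, and since
`x = ∑ eᵢxeⱼ`, the ideal `I` is determined by the set of nonzero Peirce components it contains.
These components are independent subspaces of `A`, so there are at most `dim A` of them.
-/

def IsIndecomposableModule (A P : Type) [Ring A] [AddCommGroup P] [Module A P] : Prop :=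
  Nontrivial P ∧ ∀ N1 N2 : Submodule A P, N1 ⊔ N2 = ⊤ → N1 ⊓ N2 = ⊥ → N1 = ⊥ ∨ N2 = ⊥

open Module Submodule

section Idempotent

variable {A : Type*} [Ring A] {e : A}

theorem IsIdempotentElem.mul_eq_self_of_mem_span (he : IsIdempotentElem e) {x : A}
    (hx : x ∈ span A {e}) : x * e = x := by
  obtain ⟨a, rfl⟩ := mem_span_singleton.1 hx
  rw [smul_eq_mul, mul_assoc, he.eq]

theorem IsIdempotentElem.smul_generator (he : IsIdempotentElem e) (w : span A {e}) :
    (w : A) • (⟨e, mem_span_singleton_self e⟩ : span A {e}) = w :=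
  Subtype.ext (he.mul_eq_self_of_mem_span w.2)

theorem IsIdempotentElem.projective_span_singleton (he : IsIdempotentElem e) :
    Module.Projective A (span A {e}) :=
  .of_split (span A {e}).subtype (LinearMap.toSpanSingleton A _ ⟨e, mem_span_singleton_self e⟩)
    (LinearMap.ext he.smul_generator)

theorem IsIdempotentElem.span_singleton_lt {f g : A} (hf : IsIdempotentElem f)
    (hg : IsIdempotentElem g) (hfg : f * g = 0) (hgf : g * f = 0) (hg0 : g ≠ 0) :
    span A {f} < span A {f + g} := by
  have hf_mem : f ∈ span A {f + g} := mem_span_singleton.2 ⟨f, by simp [mul_add, hf.eq, hfg]⟩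
  have hg_mem : g ∈ span A {f + g} := mem_span_singleton.2 ⟨g, by simp [mul_add, hg.eq, hgf]⟩
  refine SetLike.lt_iff_le_and_exists.2 ⟨span_singleton_le_iff_mem _ _ |>.2 hf_mem, g, hg_mem, ?_⟩
  intro hg_mem'
  exact hg0 (by rw [← hf.mul_eq_self_of_mem_span hg_mem', hgf])

end Idempotent

section Primitive

def IsPrimitiveIdempotent {A : Type*} [Ring A] (e : A) : Prop :=
  IsIdempotentElem e ∧ e ≠ 0 ∧ ∀ f g : A, IsIdempotentElem f → IsIdempotentElem g →
    f * g = 0 → g * f = 0 → f + g = e → f = 0 ∨ g = 0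

variable {A : Type} [Ring A] {e : A}

theorem IsIdempotentElem.mul_eq_zero_of_add_eq_generator (he : IsIdempotentElem e)
    {N₁ N₂ : Submodule A (span A {e})} (hN : N₁ ⊓ N₂ = ⊥) {u v : span A {e}} (hu : u ∈ N₁)
    (hv : v ∈ N₂) (huv : u + v = ⟨e, mem_span_singleton_self e⟩) :
    (u : A) * v = 0 ∧ IsIdempotentElem (u : A) := by
  have hsub : (u : A) • v = u - (u : A) • u := by
    rw [eq_sub_iff_add_eq', ← smul_add, huv, he.smul_generator]
  have hzero : (u : A) • v = 0 := by
    have : (u : A) • v ∈ N₁ ⊓ N₂ :=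
      ⟨hsub ▸ N₁.sub_mem hu (N₁.smul_mem _ hu), N₂.smul_mem _ hv⟩
    rwa [hN, mem_bot] at this
  rw [hzero, eq_comm, sub_eq_zero] at hsub
  exact ⟨congrArg Subtype.val hzero, congrArg Subtype.val hsub.symm⟩

theorem IsIdempotentElem.eq_bot_of_generator_mem (he : IsIdempotentElem e)
    {N₁ N₂ : Submodule A (span A {e})} (hN : N₁ ⊓ N₂ = ⊥)
    (hgen : ⟨e, mem_span_singleton_self e⟩ ∈ N₂) : N₁ = ⊥ := by
  have : N₂ = ⊤ := eq_top_iff.2 fun w _ => he.smul_generator w ▸ N₂.smul_mem _ hgen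
  rwa [this, inf_top_eq] at hN

theorem IsPrimitiveIdempotent.isIndecomposableModule_span (he : IsPrimitiveIdempotent e) :
    IsIndecomposableModule A (span A {e}) := by
  obtain ⟨he, he0, hprim⟩ := he
  refine ⟨nontrivial_of_ne ⟨e, mem_span_singleton_self e⟩ 0 (by simpa using he0),
    fun N₁ N₂ hsup hinf => ?_⟩
  obtain ⟨u, hu, v, hv, huv⟩ := mem_sup.1 (hsup ▸ mem_top :
    (⟨e, mem_span_singleton_self e⟩ : span A {e}) ∈ N₁ ⊔ N₂)
  obtain ⟨huv0, hu'⟩ := he.mul_eq_zero_of_add_eq_generator hinf hu hv huv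
  obtain ⟨hvu0, hv'⟩ :=
    he.mul_eq_zero_of_add_eq_generator (inf_comm N₁ N₂ ▸ hinf) hv hu (add_comm u v ▸ huv)
  rcases hprim u v hu' hv' huv0 hvu0 (congrArg Subtype.val huv) with hu0 | hv0
  · left
    refine he.eq_bot_of_generator_mem hinf ?_
    rwa [← huv, (Subtype.ext hu0 : u = 0), zero_add]
  · right
    refine he.eq_bot_of_generator_mem (inf_comm N₁ N₂ ▸ hinf) ?_
    rwa [← huv, (Subtype.ext hv0 : v = 0), add_zero]

end Primitive

section Decomposition

variable {A : Type*} [Ring A]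

structure IsPrimitiveDecomposition (s : Finset A) (e : A) : Prop where
  isPrimitive : ∀ x ∈ s, IsPrimitiveIdempotent x
  pairwise_mul_eq_zero : (s : Set A).Pairwise (· * · = 0)
  sum_eq : ∑ x ∈ s, x = e

namespace IsPrimitiveDecomposition

variable {s t : Finset A} {e f x : A}

theorem mul_eq_self (hs : IsPrimitiveDecomposition s e) (hx : x ∈ s) : x * e = x := by
  rw [← hs.sum_eq, Finset.mul_sum, Finset.sum_eq_single_of_mem x hx
    fun y hy hyx => hs.pairwise_mul_eq_zero hx hy hyx.symm, (hs.isPrimitive x hx).1.eq]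

theorem self_mul_eq (hs : IsPrimitiveDecomposition s e) (hx : x ∈ s) : e * x = x := by
  rw [← hs.sum_eq, Finset.sum_mul, Finset.sum_eq_single_of_mem x hx
    fun y hy hyx => hs.pairwise_mul_eq_zero hy hx hyx, (hs.isPrimitive x hx).1.eq]

theorem mul_eq_zero_of_mem (hs : IsPrimitiveDecomposition s e) (ht : IsPrimitiveDecomposition t f)
    (hef : e * f = 0) {y : A} (hx : x ∈ s) (hy : y ∈ t) : x * y = 0 := by
  rw [← hs.mul_eq_self hx, ← ht.self_mul_eq hy, mul_assoc, ← mul_assoc e, hef, zero_mul, mul_zero]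

theorem union [DecidableEq A] (hs : IsPrimitiveDecomposition s e)
    (ht : IsPrimitiveDecomposition t f) (hef : e * f = 0) (hfe : f * e = 0) :
    IsPrimitiveDecomposition (s ∪ t) (e + f) := by
  have hdisj : Disjoint s t := Finset.disjoint_left.2 fun x hx hxt =>
    (hs.isPrimitive x hx).2.1 <| (hs.isPrimitive x hx).1.eq ▸ hs.mul_eq_zero_of_mem ht hef hx hxt
  refine ⟨fun x hx => ?_, ?_, by rw [Finset.sum_union hdisj, hs.sum_eq, ht.sum_eq]⟩
  · rcases Finset.mem_union.1 hx with hx | hx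
    exacts [hs.isPrimitive x hx, ht.isPrimitive x hx]
  · rw [Finset.coe_union, Set.pairwise_union]
    exact ⟨hs.pairwise_mul_eq_zero, ht.pairwise_mul_eq_zero, fun x hx y hy _ =>
      ⟨hs.mul_eq_zero_of_mem ht hef hx hy, ht.mul_eq_zero_of_mem hs hfe hy hx⟩⟩

theorem completeOrthogonalIdempotents (hs : IsPrimitiveDecomposition s 1) :
    CompleteOrthogonalIdempotents ((↑) : s → A) where
  idem x := (hs.isPrimitive x x.2).1
  ortho x y hxy := hs.pairwise_mul_eq_zero x.2 y.2 (Subtype.coe_injective.ne hxy)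
  complete := (s.sum_coe_sort id).trans hs.sum_eq

end IsPrimitiveDecomposition

theorem IsIdempotentElem.exists_isPrimitiveDecomposition [IsArtinianRing A] {e : A}
    (he : IsIdempotentElem e) : ∃ s : Finset A, IsPrimitiveDecomposition s e := by
  induction e using (InvImage.wf (fun e : A => span A {e}) wellFounded_lt).induction with
  | _ e ih => ?_
  by_cases he0 : e = 0
  · exact ⟨∅, by simp, by simp, by simp [he0]⟩
  by_cases hprim : IsPrimitiveIdempotent e
  · exact ⟨{e}, by simpa using hprim, by simp, by simp⟩
  obtain ⟨f, g, hf, hg, hfg, hgf, rfl, hf0, hg0⟩ : ∃ f g : A, IsIdempotentElem f ∧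
      IsIdempotentElem g ∧ f * g = 0 ∧ g * f = 0 ∧ f + g = e ∧ f ≠ 0 ∧ g ≠ 0 := by
    simpa [IsPrimitiveIdempotent, he, he0] using hprim
  obtain ⟨s, hs⟩ := ih f (hf.span_singleton_lt hg hfg hgf hg0) hf
  obtain ⟨t, ht⟩ := ih g (add_comm f g ▸ hg.span_singleton_lt hf hgf hfg hf0) hg
  classical
  exact ⟨s ∪ t, hs.union ht hfg hgf⟩

end Decomposition

section Peirce

variable (k : Type*) {A : Type*} [CommRing k] [Ring A] [Algebra k A]

def peirceComponent (e f : A) : Submodule k A where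
  carrier := {x | e * x = x ∧ x * f = x}
  add_mem' hx hy := ⟨by rw [mul_add, hx.1, hy.1], by rw [add_mul, hx.2, hy.2]⟩
  zero_mem' := ⟨mul_zero e, zero_mul f⟩
  smul_mem' c _ hx := ⟨by rw [mul_smul_comm, hx.1], by rw [smul_mul_assoc, hx.2]⟩

variable {k} {e f x : A}

theorem mul_mul_mem_peirceComponent (he : IsIdempotentElem e) (hf : IsIdempotentElem f) (x : A) :
    e * x * f ∈ peirceComponent k e f :=
  ⟨by rw [← mul_assoc, ← mul_assoc, he.eq], by rw [mul_assoc, hf.eq]⟩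

/-- Evaluation at `e` maps `Hom_A(Ae, Af)` onto `eAf`. -/
theorem rank_peirceComponent_le :
    Module.rank k (peirceComponent k e f) ≤ Module.rank k (span A {e} →ₗ[A] span A {f}) := by
  let eval : (span A {e} →ₗ[A] span A {f}) →ₗ[k] A :=
    { toFun := fun T => T ⟨e, mem_span_singleton_self e⟩
      map_add' := fun _ _ => rfl
      map_smul' := fun _ _ => rfl }
  refine (Submodule.rank_mono fun z hz => ?_).trans (rank_range_le eval)
  have hmap : ∀ w ∈ span A {e}, w * z ∈ span A {f} := fun w _ =>
    mem_span_singleton.2 ⟨w * z, by rw [smul_eq_mul, mul_assoc, hz.2]⟩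
  exact ⟨(LinearMap.toSpanSingleton A A z).restrict hmap, hz.1⟩

end Peirce

section PeirceIndependence

variable {k A ι : Type*} [CommRing k] [Ring A] [Algebra k A] {e : ι → A}

theorem OrthogonalIdempotents.mul_mul_eq_zero_of_mem_peirceComponent
    (he : OrthogonalIdempotents e) {p q : ι × ι} (hpq : p ≠ q) {x : A}
    (hx : x ∈ peirceComponent k (e p.1) (e p.2)) : e q.1 * x * e q.2 = 0 := by
  by_cases h₁ : q.1 = p.1
  · have h₂ : p.2 ≠ q.2 := fun h₂ => hpq (Prod.ext h₁.symm h₂)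
    rw [← hx.2, mul_assoc, mul_assoc, he.ortho h₂, mul_zero, mul_zero]
  · rw [← hx.1, ← mul_assoc, he.ortho h₁, zero_mul, zero_mul]

theorem OrthogonalIdempotents.iSupIndep_peirceComponent (he : OrthogonalIdempotents e) :
    iSupIndep fun p : ι × ι => peirceComponent k (e p.1) (e p.2) := by
  refine iSupIndep_def.2 fun q => disjoint_def.2 fun x hx hx' => ?_
  let proj : A →ₗ[k] A := LinearMap.mulLeft k (e q.1) ∘ₗ LinearMap.mulRight k (e q.2)
  have hle : ⨆ (p) (_ : p ≠ q), peirceComponent k (e p.1) (e p.2) ≤ LinearMap.ker proj :=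
    iSup₂_le fun p hpq y hy => by
      simpa [proj, mul_assoc] using he.mul_mul_eq_zero_of_mem_peirceComponent hpq hy
  have : proj x = x := by simp [proj, hx.1, hx.2]
  rw [← this]
  exact hle hx'

end PeirceIndependence

theorem exists_smul_eq_of_rank_le_one {K V : Type*} [DivisionRing K] [AddCommGroup V]
    [Module K V] (h : Module.rank K V ≤ 1) {x : V} (hx : x ≠ 0) (y : V) : ∃ c : K, c • x = y := by
  obtain ⟨v, hv⟩ := rank_le_one_iff.1 h
  obtain ⟨a, rfl⟩ := hv x
  obtain ⟨b, rfl⟩ := hv y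
  refine ⟨b * a⁻¹, ?_⟩
  rw [smul_smul, mul_assoc, inv_mul_cancel₀ (left_ne_zero_of_smul hx), mul_one]

section Counting

variable {k A ι : Type*} [Field k] [Ring A] [Algebra k A] {e : ι → A}

theorem TwoSidedIdeal.peirceComponent_subset {e f x : A} (I : TwoSidedIdeal A)
    (hrank : Module.rank k (peirceComponent k e f) ≤ 1) (hx : x ∈ peirceComponent k e f)
    (hxI : x ∈ I) (hx0 : x ≠ 0) : (peirceComponent k e f : Set A) ⊆ I := by
  intro y hy
  obtain ⟨c, hc⟩ := exists_smul_eq_of_rank_le_one hrank (x := ⟨x, hx⟩)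
    (by simpa using hx0) ⟨y, hy⟩
  rw [show y = c • x from congrArg Subtype.val hc.symm, Algebra.smul_def]
  exact I.mul_mem_left _ _ hxI

variable [Fintype ι]

theorem CompleteOrthogonalIdempotents.sum_mul_mul (he : CompleteOrthogonalIdempotents e)
    (x : A) : ∑ i, ∑ j, e i * x * e j = x := by
  simp only [← Finset.mul_sum, ← Finset.sum_mul, he.complete, one_mul, mul_one]

theorem TwoSidedIdeal.mem_iff_forall_mul_mul_mem (he : CompleteOrthogonalIdempotents e)
    (I : TwoSidedIdeal A) {x : A} : x ∈ I ↔ ∀ i j, e i * x * e j ∈ I :=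
  ⟨fun hx _ _ => I.mul_mem_right _ _ (I.mul_mem_left _ _ hx), fun h =>
    he.sum_mul_mul x ▸ sum_mem fun i _ => sum_mem fun j _ => h i j⟩

variable (k) in
theorem TwoSidedIdeal.mem_iff_peirceComponent_subset (he : CompleteOrthogonalIdempotents e)
    (hrank : ∀ i j, Module.rank k (peirceComponent k (e i) (e j)) ≤ 1)
    (I : TwoSidedIdeal A) {x : A} :
    x ∈ I ↔ ∀ i j, e i * x * e j ≠ 0 → (peirceComponent k (e i) (e j) : Set A) ⊆ I := by
  have hmem : ∀ i j, e i * x * e j ∈ peirceComponent k (e i) (e j) := fun i j =>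
    mul_mul_mem_peirceComponent (he.idem i) (he.idem j) x
  rw [I.mem_iff_forall_mul_mul_mem he]
  refine forall₂_congr fun i j => ⟨fun hI h0 => I.peirceComponent_subset (hrank i j)
    (hmem i j) hI h0, fun hsub => ?_⟩
  by_cases h0 : e i * x * e j = 0
  · exact h0 ▸ I.zero_mem
  · exact hsub h0 (hmem i j)

theorem TwoSidedIdeal.finite_and_card_le [FiniteDimensional k A]
    (he : CompleteOrthogonalIdempotents e)
    (hrank : ∀ i j, Module.rank k (peirceComponent k (e i) (e j)) ≤ 1) :
    Finite (TwoSidedIdeal A) ∧ Nat.card (TwoSidedIdeal A) ≤ 2 ^ finrank k A := by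
  classical
  let V : ι × ι → Submodule k A := fun p => peirceComponent k (e p.1) (e p.2)
  let Ψ : TwoSidedIdeal A → Set {p // V p ≠ ⊥} := fun I => {p | (V p : Set A) ⊆ I}
  have hΨ : Function.Injective Ψ := fun I J hIJ => TwoSidedIdeal.ext fun x => by
    rw [I.mem_iff_peirceComponent_subset k he hrank, J.mem_iff_peirceComponent_subset k he hrank]
    refine forall₂_congr fun i j => imp_congr_right fun h0 => ?_
    have hne : V (i, j) ≠ ⊥ := (Submodule.ne_bot_iff _).2
      ⟨_, mul_mul_mem_peirceComponent (he.idem i) (he.idem j) x, h0⟩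
    exact Set.ext_iff.1 hIJ ⟨(i, j), hne⟩
  refine ⟨Finite.of_injective Ψ hΨ, ?_⟩
  calc Nat.card (TwoSidedIdeal A) ≤ Nat.card (Set {p // V p ≠ ⊥}) :=
        Nat.card_le_card_of_injective Ψ hΨ
    _ = 2 ^ Fintype.card {p // V p ≠ ⊥} := by rw [Nat.card_eq_fintype_card, Fintype.card_set]
    _ ≤ 2 ^ finrank k A :=
        Nat.pow_le_pow_right two_pos he.iSupIndep_peirceComponent.subtype_ne_bot_le_finrank

end Counting

theorem statement17_general (k A : Type) [Field k] [Ring A] [Algebra k A]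
    [FiniteDimensional k A]
    (h : ∀ (P P' : Type) [AddCommGroup P] [Module k P] [Module A P]
      [IsScalarTower k A P] [SMulCommClass A k P]
      [AddCommGroup P'] [Module k P'] [Module A P']
      [IsScalarTower k A P'] [SMulCommClass A k P'],
      Module.Projective A P → IsIndecomposableModule A P →
      Module.Projective A P' → IsIndecomposableModule A P' →
      Module.rank k (P →ₗ[A] P') ≤ 1) :
    Finite (TwoSidedIdeal A) ∧ Nat.card (TwoSidedIdeal A) ≤ 2 ^ Module.finrank k A := by
  have : IsArtinianRing A := .of_finite k A
  obtain ⟨s, hs⟩ := IsIdempotentElem.one.exists_isPrimitiveDecomposition (A := A)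
  refine TwoSidedIdeal.finite_and_card_le hs.completeOrthogonalIdempotents fun i j => ?_
  have hi := hs.isPrimitive i i.2
  have hj := hs.isPrimitive j j.2
  exact rank_peirceComponent_le.trans <| h _ _ hi.1.projective_span_singleton
    hi.isIndecomposableModule_span hj.1.projective_span_singleton hj.isIndecomposableModule_span

/-- STATEMENT 17: if `A` is a finite-dimensional associative unital algebra over an
algebraically closed field `k` such that `dim_k Hom_A(P, P') ≤ 1` for every pair of
indecomposable projective left `A`-modules `P`, `P'`, then `A` has only finitely many
two-sided ideals, indeed at most `2 ^ dim_k A` of them. -/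
theorem statement17 (k A : Type) [Field k] [IsAlgClosed k] [Ring A] [Algebra k A]
    [FiniteDimensional k A]
    (h : ∀ (P P' : Type) [AddCommGroup P] [Module k P] [Module A P]
      [IsScalarTower k A P] [SMulCommClass A k P]
      [AddCommGroup P'] [Module k P'] [Module A P']
      [IsScalarTower k A P'] [SMulCommClass A k P'],
      Module.Projective A P → IsIndecomposableModule A P →
      Module.Projective A P' → IsIndecomposableModule A P' →
      Module.rank k (P →ₗ[A] P') ≤ 1) :
    Finite (TwoSidedIdeal A) ∧ Nat.card (TwoSidedIdeal A) ≤ 2 ^ Module.finrank k A :=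
  statement17_general k A h
end
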